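/- Let (M,d) be a metric space and X, Y ⊆ M. Assume there exists a ∈ (0,∞) such that for each ρ ∈ (0,a) and each x' ∈ X there exists x'' ∈ X with d(x',x'') = ρ. Let υ_Y ∈ (0,∞), β ∈ (0,1], s₂ ∈ [β,∞), s₃ ∈ (0,1], with s₂ − β = υ_Y. Let ν be a measure on a σ-algebra of subsets of Y containing the Borel subsets of Y, with ν(B(x,r) ∩ Y) < ∞ for all x ∈ X and r > 0, and ν(Y) < ∞. Let Y be strongly upper υ_Y-Ahlfors regular with respect to X and let Z ∈ 𝒦_{υ_Y,s₂,s₃}(X×Y). If there exists C > 0 such that for every g ∈ C^{0,β}(X∪Y) the function Q[Z,g,1] is bounded on X with sup_X |Q[Z,g,1]| ≤ C·|g|_β and satisfies |Q[Z,g,1](x') − Q[Z,g,1](x'')| ≤ C·|g|_β·max{d(x',x'')^β, ω_{s₃}(d(x',x''))} for all x',x'' ∈ X, then sup over x ∈ X and r ∈ (0, e^{−1/s₃}) of |∫_{Y\B(x,r)} Z(x,y) dν(y)| · r^β / max{r^β, ω_{s₃}(r)} is finite. -/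

import Mathlib

open MeasureTheory Metric Set
open scoped ENNReal

noncomputable section

variable {M : Type*} [MetricSpace M] [MeasurableSpace M] [BorelSpace M]

/-- `Y` is upper `υ`-Ahlfors regular with respect to `X`:
there exist `r₀ ∈ (0,∞]` and `c > 0` with `ν (B(x,r) ∩ Y) ≤ c rᵘ` for `x ∈ X`, `0 < r < r₀`. -/
def UpperAhlforsRegular (ν : Measure M) (X Y : Set M) (υ : ℝ) : Prop :=
  ∃ c : ℝ, 0 < c ∧ ∃ r₀ : ℝ≥0∞, 0 < r₀ ∧
    ∀ x ∈ X, ∀ r : ℝ, 0 < r → ENNReal.ofReal r < r₀ →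
      ν (ball x r ∩ Y) ≤ ENNReal.ofReal (c * r ^ υ)

/-- `Y` is strongly upper `υ`-Ahlfors regular with respect to `X`. -/
def StronglyUpperAhlforsRegular (ν : Measure M) (X Y : Set M) (υ : ℝ) : Prop :=
  ∃ c : ℝ, 0 < c ∧ ∃ r₀ : ℝ≥0∞, 0 < r₀ ∧
    ∀ x ∈ X, ∀ r₁ r₂ : ℝ, 0 ≤ r₁ → r₁ < r₂ → ENNReal.ofReal r₂ < r₀ →
      ν ((ball x r₂ \ ball x r₁) ∩ Y) ≤ ENNReal.ofReal (c * (r₂ ^ υ - r₁ ^ υ))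

/-- the set of values `d(x,y)^{s₁} |K(x,y)|`, `x ∈ X`, `y ∈ Y`, `x ≠ y`. -/
def kernelSet₁ (X Y : Set M) (s₁ : ℝ) (K : M → M → ℂ) : Set ℝ :=
  {t | ∃ x ∈ X, ∃ y ∈ Y, x ≠ y ∧ t = dist x y ^ s₁ * ‖K x y‖}

/-- the set of values `(d(x',y)^{s₂}/d(x',x'')^{s₃}) |K(x',y) - K(x'',y)|`,
`x', x'' ∈ X`, `x' ≠ x''`, `y ∈ Y \ B(x', 2 d(x',x''))`. -/
def kernelSet₂ (X Y : Set M) (s₂ s₃ : ℝ) (K : M → M → ℂ) : Set ℝ :=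
  {t | ∃ x' ∈ X, ∃ x'' ∈ X, x' ≠ x'' ∧ ∃ y ∈ Y \ ball x' (2 * dist x' x''),
        t = dist x' y ^ s₂ / dist x' x'' ^ s₃ * ‖K x' y - K x'' y‖}

/-- membership in the kernel class `𝒦_{s₁,s₂,s₃}(X×Y)`: continuity off the diagonal
together with finiteness of the two suprema defining the norm. -/
def MemK (X Y : Set M) (s₁ s₂ s₃ : ℝ) (K : M → M → ℂ) : Prop :=
  ContinuousOn (fun p : M × M => K p.1 p.2) ((X ×ˢ Y) \ {p : M × M | p.1 = p.2}) ∧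
  BddAbove (kernelSet₁ X Y s₁ K) ∧ BddAbove (kernelSet₂ X Y s₂ s₃ K)

/-- the norm `‖K‖` of the class `𝒦_{s₁,s₂,s₃}(X×Y)`. -/
def kNorm (X Y : Set M) (s₁ s₂ s₃ : ℝ) (K : M → M → ℂ) : ℝ :=
  sSup (kernelSet₁ X Y s₁ K) + sSup (kernelSet₂ X Y s₂ s₃ K)

/-- the set of values `|∫_{Y \ B(x,r)} K(x,y) dν(y)|`, `x ∈ X`, `r > 0`
(the maximal function values). -/
def maxFunSet (ν : Measure M) (X Y : Set M) (K : M → M → ℂ) : Set ℝ :=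
  {t | ∃ x ∈ X, ∃ r : ℝ, 0 < r ∧ t = ‖∫ y in Y \ ball x r, K x y ∂ν‖}

/-- membership in the kernel class `𝒦♯_{s₁,s₂,s₃}(X×Y)`. -/
def MemKSharp (ν : Measure M) (X Y : Set M) (s₁ s₂ s₃ : ℝ) (K : M → M → ℂ) : Prop :=
  MemK X Y s₁ s₂ s₃ K ∧
  (∀ x ∈ X, ∀ r : ℝ, 0 < r → IntegrableOn (K x) (Y \ ball x r) ν) ∧
  BddAbove (maxFunSet ν X Y K)

/-- the norm of the class `𝒦♯_{s₁,s₂,s₃}(X×Y)`. -/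
def kNormSharp (ν : Measure M) (X Y : Set M) (s₁ s₂ s₃ : ℝ) (K : M → M → ℂ) : ℝ :=
  kNorm X Y s₁ s₂ s₃ K + sSup (maxFunSet ν X Y K)

/-- the set of Hölder quotients `|g x - g y| / d(x,y)^β`, `x, y ∈ D`, `x ≠ y`. -/
def holderSet (D : Set M) (β : ℝ) (g : M → ℂ) : Set ℝ :=
  {t | ∃ x ∈ D, ∃ y ∈ D, x ≠ y ∧ t = ‖g x - g y‖ / dist x y ^ β}

/-- `g` is `β`-Hölder continuous on `D`. -/
def IsHolderOn (D : Set M) (β : ℝ) (g : M → ℂ) : Prop :=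
  BddAbove (holderSet D β g)

/-- the `β`-Hölder seminorm `|g|_β` of `g` on `D`. -/
def holderSemi (D : Set M) (β : ℝ) (g : M → ℂ) : ℝ :=
  sSup (holderSet D β g)

def supValSet (D : Set M) (f : M → ℂ) : Set ℝ := {t | ∃ x ∈ D, t = ‖f x‖}

/-- `f` is bounded on `D`. -/
def BoundedOnSet (D : Set M) (f : M → ℂ) : Prop := BddAbove (supValSet D f)

/-- the sup-norm of `f` on `D`. -/
def supNormOn (D : Set M) (f : M → ℂ) : ℝ := sSup (supValSet D f)

/-- `Q[Z,g,1](x) = ∫_Y Z(x,y) (g(x) - g(y)) dν(y)`. -/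
def Qop (ν : Measure M) (Y : Set M) (Z : M → M → ℂ) (g : M → ℂ) (x : M) : ℂ :=
  ∫ y in Y, Z x y * (g x - g y) ∂ν

/-- the modulus of continuity `ω_θ`. -/
def omegaMod (θ r : ℝ) : ℝ :=
  if r ≤ 0 then 0
  else if r ≤ Real.exp (-1 / θ) then r ^ θ * |Real.log r|
  else Real.exp (-1 / θ) ^ θ * |Real.log (Real.exp (-1 / θ))|

/-! For small `r`, pick `x'' ∈ X` at distance `r` from `x` and test `Q` against the plateau
function `g` equal to `1` on `B(x, r/4)` and `0` off `B(x, r/2)`, whose `β`-Hölder seminorm is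
at most `(4/r)^β`. Then `Q[Z,g,1](x)` is the truncated integral `∫_{Y \ B(x,r)} Z(x,·)` plus an
integral over `B(x,r)` of a kernel vanishing on `B(x, r/4)`, and `Q[Z,g,1](x'')` is an integral
over `B(x, r/2)`, where `d(x'', ·) ≥ r/2`. Since `|Z(x,y)| ≲ d(x,y)^{-υ}` and
`ν(B(x,ρ) ∩ Y) ≲ ρ^υ`, both error terms are bounded, so the truncated integral is at most
`O(1) + C (4/r)^β max(r^β, ω(r))`. For `r` bounded below, `|Z(x,·)| ≲ r^{-υ}` on `Y \ B(x,r)`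
and `ν(Y) < ∞` suffice. -/

open Filter Topology

theorem min_one_le_rpow {u β : ℝ} (hu : 0 ≤ u) (hβ0 : 0 ≤ β) (hβ1 : β ≤ 1) :
    min 1 u ≤ u ^ β := by
  rcases le_total 1 u with h | h
  · exact (min_le_left _ _).trans (Real.one_le_rpow h hβ0)
  · calc min 1 u ≤ u := min_le_right _ _
      _ = u ^ (1 : ℝ) := (Real.rpow_one u).symm
      _ ≤ u ^ β := Real.rpow_le_rpow_of_exponent_ge' hu h hβ0 hβ1

theorem ContinuousOn.mul_of_eventuallyEq_zero {α R : Type*} [TopologicalSpace α] [T1Space α]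
    [TopologicalSpace R] [MulZeroClass R] [ContinuousMul R] {f h : α → R} {s : Set α} {x : α}
    (hf : ContinuousOn f (s \ {x})) (hh : Continuous h) (hx : h =ᶠ[𝓝 x] 0) :
    ContinuousOn (fun y => f y * h y) s := by
  intro y hy
  rcases eq_or_ne y x with rfl | hne
  · have hzero : (fun y => f y * h y) =ᶠ[𝓝 y] fun _ => f y * h y := by
      filter_upwards [hx] with z hz
      simp [hz, hx.self_of_nhds]
    exact (continuousAt_const.congr hzero.symm).continuousWithinAt
  · exact (continuousWithinAt_sdiff_singleton (y := x)).mp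
      ((hf y ⟨hy, hne⟩).mul hh.continuousWithinAt)

theorem ContinuousOn.section_sdiff_singleton {α β : Type*} [TopologicalSpace α]
    [TopologicalSpace β] {f : α → α → β} {X Y : Set α} {x : α}
    (hf : ContinuousOn (fun p : α × α => f p.1 p.2) ((X ×ˢ Y) \ {p : α × α | p.1 = p.2}))
    (hx : x ∈ X) : ContinuousOn (f x) (Y \ {x}) :=
  hf.comp (continuous_const.prodMk continuous_id).continuousOn
    fun _ hy => ⟨⟨hx, hy.1⟩, fun h => hy.2 (Eq.symm h)⟩

section Cutoff

variable {α : Type*} [PseudoMetricSpace α] {x : α} {r : ℝ}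

def cutoff (x : α) (r : ℝ) (y : α) : ℝ := min 1 (max 0 (2 - 4 * dist x y / r))

theorem cutoff_nonneg (y : α) : 0 ≤ cutoff x r y :=
  le_min zero_le_one (le_max_left _ _)

theorem cutoff_le_one (y : α) : cutoff x r y ≤ 1 :=
  min_le_left _ _

theorem cutoff_eq_one (hr : 0 < r) {y : α} (hy : dist x y ≤ r / 4) : cutoff x r y = 1 := by
  have : 4 * dist x y / r ≤ 1 := by rw [div_le_one hr]; linarith
  rw [cutoff, max_eq_right (by linarith), min_eq_left (by linarith)]

theorem cutoff_self (hr : 0 < r) : cutoff x r x = 1 :=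
  cutoff_eq_one hr (by rw [dist_self]; positivity)

theorem cutoff_eq_zero (hr : 0 < r) {y : α} (hy : r / 2 ≤ dist x y) : cutoff x r y = 0 := by
  have : 2 ≤ 4 * dist x y / r := by rw [le_div_iff₀ hr]; linarith
  rw [cutoff, max_eq_left (by linarith), min_eq_right zero_le_one]

theorem norm_cutoff_le (y : α) : ‖(cutoff x r y : ℂ)‖ ≤ 1 := by
  rw [Complex.norm_real, Real.norm_of_nonneg (cutoff_nonneg y)]
  exact cutoff_le_one y

theorem norm_one_sub_cutoff_le (y : α) : ‖(1 : ℂ) - cutoff x r y‖ ≤ 1 := by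
  rw [← Complex.ofReal_one, ← Complex.ofReal_sub, Complex.norm_real,
    Real.norm_of_nonneg (sub_nonneg.2 (cutoff_le_one y))]
  exact sub_le_self 1 (cutoff_nonneg y)

@[fun_prop]
theorem continuous_cutoff : Continuous (cutoff x r) := by
  unfold cutoff
  fun_prop

theorem abs_cutoff_sub_le (hr : 0 < r) (y z : α) :
    |cutoff x r y - cutoff x r z| ≤ 4 / r * dist y z :=
  calc |cutoff x r y - cutoff x r z|
      ≤ |max 0 (2 - 4 * dist x y / r) - max 0 (2 - 4 * dist x z / r)| := by
        unfold cutoff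
        exact (abs_min_sub_min_le_max _ _ _ _).trans (by simp)
    _ ≤ |(2 - 4 * dist x y / r) - (2 - 4 * dist x z / r)| :=
        (abs_max_sub_max_le_max _ _ _ _).trans (by simp)
    _ = 4 / r * |dist x z - dist x y| := by
        rw [← abs_of_pos (div_pos four_pos hr), ← abs_mul]
        ring_nf
    _ ≤ 4 / r * dist y z := by
        gcongr
        exact abs_sub_le_iff.2 ⟨by linarith [dist_triangle x y z],
          by linarith [dist_triangle x z y, dist_comm y z]⟩

theorem norm_cutoff_sub_le (hr : 0 < r) {β : ℝ} (hβ0 : 0 ≤ β) (hβ1 : β ≤ 1) (y z : α) :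
    ‖(cutoff x r y : ℂ) - cutoff x r z‖ ≤ (4 / r) ^ β * dist y z ^ β := by
  have hunit : |cutoff x r y - cutoff x r z| ≤ 1 :=
    abs_sub_le_of_nonneg_of_le (cutoff_nonneg y) (cutoff_le_one y) (cutoff_nonneg z)
      (cutoff_le_one z)
  rw [← Complex.ofReal_sub, Complex.norm_real, Real.norm_eq_abs,
    ← Real.mul_rpow (by positivity) dist_nonneg]
  exact (le_min hunit (abs_cutoff_sub_le hr y z)).trans
    (min_one_le_rpow (by positivity) hβ0 hβ1)

end Cutoff

section Holder

variable {α : Type*} [MetricSpace α] {D : Set α} {β L : ℝ} {g : α → ℂ}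

theorem mem_upperBounds_holderSet_of_norm_sub_le
    (h : ∀ y ∈ D, ∀ z ∈ D, y ≠ z → ‖g y - g z‖ ≤ L * dist y z ^ β) :
    L ∈ upperBounds (holderSet D β g) := by
  rintro _ ⟨y, hy, z, hz, hyz, rfl⟩
  exact (div_le_iff₀ (Real.rpow_pos_of_pos (dist_pos.2 hyz) β)).2 (h y hy z hz hyz)

theorem isHolderOn_of_norm_sub_le
    (h : ∀ y ∈ D, ∀ z ∈ D, y ≠ z → ‖g y - g z‖ ≤ L * dist y z ^ β) : IsHolderOn D β g :=
  ⟨L, mem_upperBounds_holderSet_of_norm_sub_le h⟩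

theorem holderSemi_le_of_norm_sub_le (hL : 0 ≤ L)
    (h : ∀ y ∈ D, ∀ z ∈ D, y ≠ z → ‖g y - g z‖ ≤ L * dist y z ^ β) : holderSemi D β g ≤ L :=
  Real.sSup_le (mem_upperBounds_holderSet_of_norm_sub_le h) hL

theorem isHolderOn_cutoff {x : α} {r : ℝ} (hr : 0 < r) (hβ0 : 0 ≤ β) (hβ1 : β ≤ 1) :
    IsHolderOn D β (fun y => (cutoff x r y : ℂ)) :=
  isHolderOn_of_norm_sub_le fun y _ z _ _ => norm_cutoff_sub_le hr hβ0 hβ1 y z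

theorem holderSemi_cutoff_le {x : α} {r : ℝ} (hr : 0 < r) (hβ0 : 0 ≤ β) (hβ1 : β ≤ 1) :
    holderSemi D β (fun y => (cutoff x r y : ℂ)) ≤ (4 / r) ^ β :=
  holderSemi_le_of_norm_sub_le (by positivity)
    fun y _ z _ _ => norm_cutoff_sub_le hr hβ0 hβ1 y z

end Holder

theorem norm_setIntegral_le_of_le_ofReal {α E : Type*} [MeasurableSpace α] [NormedAddCommGroup E]
    [NormedSpace ℝ E] {μ : Measure α} {f : α → E} {s : Set α} {B m : ℝ} (hB : 0 ≤ B) (hm : 0 ≤ m)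
    (hs : μ s ≤ ENNReal.ofReal m) (hf : ∀ y ∈ s, ‖f y‖ ≤ B) : ‖∫ y in s, f y ∂μ‖ ≤ B * m :=
  (norm_setIntegral_le_of_norm_le_const (hs.trans_lt ENNReal.ofReal_lt_top) hf).trans
    (mul_le_mul_of_nonneg_left (ENNReal.toReal_le_of_le_ofReal hm hs) hB)

theorem setIntegral_compl_ball_eq_Qop_cutoff_sub {α : Type*} [MetricSpace α] [MeasurableSpace α]
    [OpensMeasurableSpace α] {ν : Measure α} {Y : Set α} {Z : α → α → ℂ} {x : α} {r : ℝ}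
    (hr : 0 < r) (hYm : MeasurableSet Y)
    (hint : IntegrableOn (fun y => Z x y * (1 - cutoff x r y)) Y ν) :
    ∫ y in Y \ ball x r, Z x y ∂ν =
      Qop ν Y Z (fun y => (cutoff x r y : ℂ)) x -
        ∫ y in Y ∩ ball x r, Z x y * (1 - cutoff x r y) ∂ν := by
  rw [Qop, cutoff_self hr, Complex.ofReal_one, ← integral_inter_add_sdiff measurableSet_ball hint,
    add_sub_cancel_left]
  refine setIntegral_congr_fun (hYm.diff measurableSet_ball) fun y hy => ?_
  have hfar : r / 2 ≤ dist x y := by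
    have := not_lt.1 (mem_ball'.not.1 hy.2)
    linarith
  simp [cutoff_eq_zero hr hfar]

section Regularity

variable {α : Type*} [MetricSpace α] [MeasurableSpace α] {ν : Measure α} {X Y : Set α} {υ : ℝ}

theorem StronglyUpperAhlforsRegular.upperAhlforsRegular (h : StronglyUpperAhlforsRegular ν X Y υ)
    (hυ : υ ≠ 0) : UpperAhlforsRegular ν X Y υ := by
  obtain ⟨c, hc, r₀, hr₀, h⟩ := h
  refine ⟨c, hc, r₀, hr₀, fun x hx r hr hrr₀ => ?_⟩
  simpa [Real.zero_rpow hυ] using h x hx 0 r le_rfl hr hrr₀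

theorem UpperAhlforsRegular.exists_forall_measure_le (h : UpperAhlforsRegular ν X Y υ) :
    ∃ c ρ₀ : ℝ, 0 < c ∧ 0 < ρ₀ ∧ ∀ x ∈ X, ∀ r, 0 < r → r ≤ ρ₀ →
      ν (ball x r ∩ Y) ≤ ENNReal.ofReal (c * r ^ υ) := by
  obtain ⟨c, hc, r₀, hr₀, h⟩ := h
  obtain ⟨ρ₀, -, hρ₀pos, hρ₀⟩ := ENNReal.lt_iff_exists_real_btwn.1 hr₀
  exact ⟨c, ρ₀, hc, ENNReal.ofReal_pos.1 hρ₀pos, fun x hx r hr hrρ₀ =>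
    h x hx r hr ((ENNReal.ofReal_le_ofReal hrρ₀).trans_lt hρ₀)⟩

end Regularity

section Kernel

variable {α : Type*} [MetricSpace α] {X Y : Set α} {Z : α → α → ℂ} {υ K : ℝ}

def KernelBound (X Y : Set α) (υ K : ℝ) (Z : α → α → ℂ) : Prop :=
  ∀ x ∈ X, ∀ y ∈ Y, x ≠ y → ‖Z x y‖ ≤ K / dist x y ^ υ

theorem exists_kernelBound_of_bddAbove (h : BddAbove (kernelSet₁ X Y υ Z)) :
    ∃ K, 0 ≤ K ∧ KernelBound X Y υ K Z := by
  obtain ⟨K, hK⟩ := h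
  refine ⟨max K 0, le_max_right _ _, fun x hx y hy hxy => ?_⟩
  rw [le_div_iff₀ (Real.rpow_pos_of_pos (dist_pos.2 hxy) υ), mul_comm]
  exact (hK ⟨x, hx, y, hy, hxy, rfl⟩).trans (le_max_left _ _)

namespace KernelBound

theorem norm_le_of_le_dist (hZ : KernelBound X Y υ K Z) (hυ : 0 ≤ υ) (hK : 0 ≤ K) {x y : α}
    (hx : x ∈ X) (hy : y ∈ Y) {s : ℝ} (hs : 0 < s) (hsd : s ≤ dist x y) : ‖Z x y‖ ≤ K / s ^ υ :=
  (hZ x hx y hy (dist_pos.1 (hs.trans_le hsd))).trans (by gcongr)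

theorem norm_mul_one_sub_cutoff_le (hZ : KernelBound X Y υ K Z) (hυ : 0 ≤ υ) (hK : 0 ≤ K)
    {x : α} (hx : x ∈ X) {r : ℝ} (hr : 0 < r) {y : α} (hy : y ∈ Y) :
    ‖Z x y * (1 - cutoff x r y)‖ ≤ K / (r / 4) ^ υ := by
  rcases lt_or_ge (dist x y) (r / 4) with hnear | hfar
  · rw [cutoff_eq_one hr hnear.le]
    simpa using by positivity
  · rw [norm_mul]
    exact (mul_le_mul (hZ.norm_le_of_le_dist hυ hK hx hy (by positivity) hfar)
      (norm_one_sub_cutoff_le y) (norm_nonneg _) (by positivity)).trans_eq (mul_one _)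

variable [MeasurableSpace α] {ν : Measure α} {x x'' : α} {r c : ℝ}

/-- `Z x` may be singular at `x`, but `1 - cutoff x r` vanishes near `x`. -/
theorem integrableOn_mul_one_sub_cutoff [OpensMeasurableSpace α] (hZ : KernelBound X Y υ K Z)
    (hυ : 0 ≤ υ) (hK : 0 ≤ K) (hZc : ContinuousOn (Z x) (Y \ {x})) (hx : x ∈ X) (hr : 0 < r)
    (hYm : MeasurableSet Y) (hνY : ν Y ≠ ⊤) :
    IntegrableOn (fun y => Z x y * (1 - cutoff x r y)) Y ν := by
  have hvanish : (fun y => (1 : ℂ) - cutoff x r y) =ᶠ[𝓝 x] 0 := by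
    filter_upwards [ball_mem_nhds x (by positivity : 0 < r / 4)] with y hy
    simp [cutoff_eq_one hr (mem_ball'.1 hy).le]
  have hmeas := (hZc.mul_of_eventuallyEq_zero (by fun_prop) hvanish).aestronglyMeasurable
    (μ := ν) hYm
  exact Integrable.mono' (integrableOn_const hνY) hmeas
    ((ae_restrict_iff' hYm).2 (ae_of_all _ fun y hy =>
      hZ.norm_mul_one_sub_cutoff_le hυ hK hx hr hy))

theorem norm_setIntegral_inter_ball_mul_one_sub_cutoff_le (hZ : KernelBound X Y υ K Z)
    (hυ : 0 ≤ υ) (hK : 0 ≤ K) (hx : x ∈ X) (hr : 0 < r) (hc : 0 ≤ c)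
    (hν : ν (ball x r ∩ Y) ≤ ENNReal.ofReal (c * r ^ υ)) :
    ‖∫ y in Y ∩ ball x r, Z x y * (1 - cutoff x r y) ∂ν‖ ≤ c * K * 4 ^ υ :=
  calc ‖∫ y in Y ∩ ball x r, Z x y * (1 - cutoff x r y) ∂ν‖
      ≤ K / (r / 4) ^ υ * (c * r ^ υ) :=
        norm_setIntegral_le_of_le_ofReal (by positivity) (by positivity)
          (by rwa [inter_comm]) fun y hy => hZ.norm_mul_one_sub_cutoff_le hυ hK hx hr hy.1
    _ = c * K * 4 ^ υ := by
        rw [Real.div_rpow hr.le (by norm_num)]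
        field_simp

theorem norm_Qop_cutoff_le (hZ : KernelBound X Y υ K Z) (hυ : 0 ≤ υ) (hK : 0 ≤ K)
    (hx'' : x'' ∈ X) (hr : 0 < r) (hd : r ≤ dist x x'') (hc : 0 ≤ c) (hYm : MeasurableSet Y)
    (hν : ν (ball x (r / 2) ∩ Y) ≤ ENNReal.ofReal (c * (r / 2) ^ υ)) :
    ‖Qop ν Y Z (fun y => (cutoff x r y : ℂ)) x''‖ ≤ c * K := by
  have hsupp : Qop ν Y Z (fun y => (cutoff x r y : ℂ)) x'' =
      ∫ y in ball x (r / 2) ∩ Y, Z x'' y * (0 - cutoff x r y) ∂ν := by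
    rw [Qop, cutoff_eq_zero hr (by linarith), Complex.ofReal_zero]
    refine setIntegral_eq_of_subset_of_forall_sdiff_eq_zero hYm inter_subset_right
      fun y hy => ?_
    have hfar : r / 2 ≤ dist x y := not_lt.1 fun h => hy.2 ⟨mem_ball'.2 h, hy.1⟩
    simp [cutoff_eq_zero hr hfar]
  have hbound : ∀ y ∈ ball x (r / 2) ∩ Y,
      ‖Z x'' y * (0 - cutoff x r y)‖ ≤ K / (r / 2) ^ υ := by
    rintro y ⟨hyx, hyY⟩
    have hfar : r / 2 ≤ dist x'' y := by
      linarith [dist_triangle x y x'', mem_ball'.1 hyx, dist_comm x'' y]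
    rw [norm_mul, zero_sub, norm_neg]
    exact (mul_le_mul (hZ.norm_le_of_le_dist hυ hK hx'' hyY (by positivity) hfar)
      (norm_cutoff_le y) (norm_nonneg _) (by positivity)).trans_eq (mul_one _)
  rw [hsupp]
  calc _ ≤ K / (r / 2) ^ υ * (c * (r / 2) ^ υ) :=
        norm_setIntegral_le_of_le_ofReal (by positivity) (by positivity) hν hbound
    _ = c * K := by
        have : 0 < (r / 2) ^ υ := by positivity
        field_simp

theorem norm_setIntegral_compl_ball_le_norm_Qop_sub [OpensMeasurableSpace α]
    (hZ : KernelBound X Y υ K Z) (hυ : 0 ≤ υ) (hK : 0 ≤ K) (hZc : ContinuousOn (Z x) (Y \ {x}))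
    (hx : x ∈ X) (hx'' : x'' ∈ X) (hr : 0 < r) (hd : r ≤ dist x x'') (hc : 0 ≤ c)
    (hYm : MeasurableSet Y) (hνY : ν Y ≠ ⊤)
    (hν : ∀ ρ, 0 < ρ → ρ ≤ r → ν (ball x ρ ∩ Y) ≤ ENNReal.ofReal (c * ρ ^ υ)) :
    ‖∫ y in Y \ ball x r, Z x y ∂ν‖ ≤
      ‖Qop ν Y Z (fun y => (cutoff x r y : ℂ)) x - Qop ν Y Z (fun y => (cutoff x r y : ℂ)) x''‖ +
        c * K * (1 + 4 ^ υ) := by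
  set Q := Qop ν Y Z (fun y => (cutoff x r y : ℂ))
  set J := ∫ y in Y ∩ ball x r, Z x y * (1 - cutoff x r y) ∂ν
  have hQ'' := hZ.norm_Qop_cutoff_le hυ hK hx'' hr hd hc hYm (hν _ (by positivity) (by linarith))
  have hJ := hZ.norm_setIntegral_inter_ball_mul_one_sub_cutoff_le hυ hK hx hr hc (hν r hr le_rfl)
  rw [setIntegral_compl_ball_eq_Qop_cutoff_sub hr hYm
    (hZ.integrableOn_mul_one_sub_cutoff hυ hK hZc hx hr hYm hνY)]
  calc ‖Q x - J‖ = ‖(Q x - Q x'') + Q x'' - J‖ := by rw [sub_add_cancel]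
    _ ≤ ‖Q x - Q x''‖ + ‖Q x''‖ + ‖J‖ :=
        (norm_sub_le _ _).trans (by gcongr; exact norm_add_le _ _)
    _ ≤ ‖Q x - Q x''‖ + c * K * (1 + 4 ^ υ) := by linarith

theorem norm_setIntegral_compl_ball_le (hZ : KernelBound X Y υ K Z) (hυ : 0 ≤ υ) (hK : 0 ≤ K)
    (hx : x ∈ X) {δ : ℝ} (hδ : 0 < δ) (hr : δ ≤ r) (hνY : ν Y ≠ ⊤) :
    ‖∫ y in Y \ ball x r, Z x y ∂ν‖ ≤ K / δ ^ υ * ν.real Y := by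
  have hbound : ∀ y ∈ Y \ ball x r, ‖Z x y‖ ≤ K / δ ^ υ := fun y hy =>
    hZ.norm_le_of_le_dist hυ hK hx hy.1 hδ (hr.trans (not_lt.1 (mem_ball'.not.1 hy.2)))
  exact (norm_setIntegral_le_of_norm_le_const ((measure_mono sdiff_subset).trans_lt hνY.lt_top)
    hbound).trans (mul_le_mul_of_nonneg_left (measureReal_mono sdiff_subset hνY) (by positivity))

end KernelBound

end Kernel

theorem mul_rpow_div_max_le_self {I r β w : ℝ} (hr : 0 < r) (hI : 0 ≤ I) :
    I * r ^ β / max (r ^ β) w ≤ I := by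
  rw [mul_div_assoc]
  exact mul_le_of_le_one_right hI
    (div_le_one_of_le₀ (le_max_left _ _) ((Real.rpow_pos_of_pos hr β).le.trans (le_max_left _ _)))

theorem mul_rpow_div_max_le {I A B r β w : ℝ} (hr : 0 < r) (hA : 0 ≤ A)
    (hI : I ≤ A + B / r ^ β * max (r ^ β) w) : I * r ^ β / max (r ^ β) w ≤ A + B := by
  have hrβ : 0 < r ^ β := Real.rpow_pos_of_pos hr β
  have hm : 0 < max (r ^ β) w := hrβ.trans_le (le_max_left _ _)
  rw [div_le_iff₀ hm]
  calc I * r ^ β ≤ (A + B / r ^ β * max (r ^ β) w) * r ^ β := by gcongr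
    _ = A * r ^ β + B * max (r ^ β) w := by field_simp
    _ ≤ (A + B) * max (r ^ β) w := by nlinarith [le_max_left (r ^ β) w]

theorem stmt_6_general {M : Type*} [MetricSpace M] [MeasurableSpace M] [BorelSpace M]
    (X Y : Set M) (ν : Measure M) (hYm : MeasurableSet Y)
    (υ β s₂ s₃ : ℝ)
    (hυ : 0 < υ) (hβ0 : 0 < β) (hβ1 : β ≤ 1)
    (hYfin : ν Y < ⊤)
    (ha : ∃ a : ℝ, 0 < a ∧ ∀ ρ : ℝ, 0 < ρ → ρ < a → ∀ x' ∈ X, ∃ x'' ∈ X, dist x' x'' = ρ)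
    (hreg : StronglyUpperAhlforsRegular ν X Y υ)
    (Z : M → M → ℂ) (hZ : MemK X Y υ s₂ s₃ Z)
    (hQ : ∃ C : ℝ, 0 < C ∧ ∀ g : M → ℂ, IsHolderOn (X ∪ Y) β g →
      BoundedOnSet X (Qop ν Y Z g) ∧
      supNormOn X (Qop ν Y Z g) ≤ C * holderSemi (X ∪ Y) β g ∧
      ∀ x' ∈ X, ∀ x'' ∈ X,
        ‖Qop ν Y Z g x' - Qop ν Y Z g x''‖ ≤
          C * holderSemi (X ∪ Y) β g * max (dist x' x'' ^ β) (omegaMod s₃ (dist x' x''))) :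
    BddAbove {t : ℝ | ∃ x ∈ X, ∃ r : ℝ, 0 < r ∧ r < Real.exp (-1 / s₃) ∧
      t = ‖∫ y in Y \ ball x r, Z x y ∂ν‖ * r ^ β /
        max (r ^ β) (omegaMod s₃ r)} := by
  obtain ⟨K, hK, hZK⟩ := exists_kernelBound_of_bddAbove hZ.2.1
  obtain ⟨c, ρ₀, hc, hρ₀, hν⟩ := (hreg.upperAhlforsRegular hυ.ne').exists_forall_measure_le
  obtain ⟨C, hC, hQ⟩ := hQ
  obtain ⟨a, ha0, ha⟩ := ha
  refine ⟨max (c * K * (1 + 4 ^ υ) + C * 4 ^ β) (K / min a ρ₀ ^ υ * ν.real Y), ?_⟩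
  rintro _ ⟨x, hx, r, hr, -, rfl⟩
  rcases lt_or_ge r (min a ρ₀) with hsmall | hlarge
  · obtain ⟨x'', hx'', hxx''⟩ := ha r hr (hsmall.trans_le (min_le_left _ _)) x hx
    have hrρ₀ : r ≤ ρ₀ := (hsmall.trans_le (min_le_right _ _)).le
    have hI := hZK.norm_setIntegral_compl_ball_le_norm_Qop_sub hυ.le hK
      (hZ.1.section_sdiff_singleton hx) hx hx'' hr hxx''.ge hc.le hYm hYfin.ne
      fun ρ hρ hρr => hν x hx ρ hρ (hρr.trans hrρ₀)
    have hdiff := (hQ _ (isHolderOn_cutoff (x := x) hr hβ0.le hβ1)).2.2 x hx x'' hx''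
    rw [hxx''] at hdiff
    refine (mul_rpow_div_max_le hr (by positivity) ?_).trans (le_max_left _ _)
    calc _ ≤ C * (4 / r) ^ β * max (r ^ β) (omegaMod s₃ r) + c * K * (1 + 4 ^ υ) := by
          refine hI.trans (add_le_add_left (hdiff.trans ?_) _)
          gcongr
          exact holderSemi_cutoff_le hr hβ0.le hβ1
      _ = _ := by rw [Real.div_rpow (by norm_num) hr.le]; ring
  · refine (mul_rpow_div_max_le_self hr (norm_nonneg _)).trans
      (le_trans ?_ (le_max_right _ _))
    exact hZK.norm_setIntegral_compl_ball_le hυ.le hK hx (lt_min ha0 hρ₀) hlarge hYfin.ne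

theorem stmt_6 {M : Type*} [MetricSpace M] [MeasurableSpace M] [BorelSpace M]
    (X Y : Set M) (ν : Measure M) (hYm : MeasurableSet Y)
    (υ β s₂ s₃ : ℝ)
    (hυ : 0 < υ) (hβ0 : 0 < β) (hβ1 : β ≤ 1) (hs₂ : β ≤ s₂) (hs₃0 : 0 < s₃) (hs₃1 : s₃ ≤ 1)
    (hball : ∀ x ∈ X, ∀ r : ℝ, 0 < r → ν (ball x r ∩ Y) < ⊤)
    (hYfin : ν Y < ⊤)
    (ha : ∃ a : ℝ, 0 < a ∧ ∀ ρ : ℝ, 0 < ρ → ρ < a → ∀ x' ∈ X, ∃ x'' ∈ X, dist x' x'' = ρ)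
    (h1 : s₂ - β = υ)
    (hreg : StronglyUpperAhlforsRegular ν X Y υ)
    (Z : M → M → ℂ) (hZ : MemK X Y υ s₂ s₃ Z)
    (hQ : ∃ C : ℝ, 0 < C ∧ ∀ g : M → ℂ, IsHolderOn (X ∪ Y) β g →
      BoundedOnSet X (Qop ν Y Z g) ∧
      supNormOn X (Qop ν Y Z g) ≤ C * holderSemi (X ∪ Y) β g ∧
      ∀ x' ∈ X, ∀ x'' ∈ X,
        ‖Qop ν Y Z g x' - Qop ν Y Z g x''‖ ≤
          C * holderSemi (X ∪ Y) β g * max (dist x' x'' ^ β) (omegaMod s₃ (dist x' x''))) :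
    BddAbove {t : ℝ | ∃ x ∈ X, ∃ r : ℝ, 0 < r ∧ r < Real.exp (-1 / s₃) ∧
      t = ‖∫ y in Y \ ball x r, Z x y ∂ν‖ * r ^ β /
        max (r ^ β) (omegaMod s₃ r)} :=
  stmt_6_general X Y ν hYm υ β s₂ s₃ hυ hβ0 hβ1 hYfin ha hreg Z hZ hQ
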